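/- arXiv:2408.06892 — 3 statements merged into one kernel-verified Lean document; each statement's English description precedes it below -/
import Mathlib

section
/- For a regular Lagrangian L on TQ × ℝ, the Reeb vector field R_L applied to the energy E_L = u^α ∂L/∂u^α − L gives R_L(E_L) = −∂L/∂s. -/
noncomputable section

/-- The phase space `TQ × ℝ` in coordinates `(q, u, s)`. -/
abbrev Phase (n : ℕ) := (Fin n → ℝ) × (Fin n → ℝ) × ℝ

/-- coordinate basis vector `∂/∂u^α`. -/
def eu' {n : ℕ} (α : Fin n) : Phase n := (0, Pi.single α 1, 0)
/-- coordinate basis vector `∂/∂s`. -/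
def es' {n : ℕ} : Phase n := (0, 0, 1)

variable {n : ℕ} (L : Phase n → ℝ)

/-- Hessian `W_{αβ} = ∂²L/∂u^α∂u^β`. -/
def Hess (p : Phase n) : Matrix (Fin n) (Fin n) ℝ :=
  Matrix.of fun α β => fderiv ℝ (fun p' => fderiv ℝ L p' (eu' α)) p (eu' β)
/-- `∂²L/∂s∂u^α`. -/
def Lsu (α : Fin n) (p : Phase n) : ℝ :=
  fderiv ℝ (fun p' => fderiv ℝ L p' (eu' α)) p es'

/-- The Reeb field `R_L = ∂/∂s − W^{αβ} (∂²L/∂s∂u^β) ∂/∂u^α`. -/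
def ReebL (Winv : Phase n → Matrix (Fin n) (Fin n) ℝ) (p : Phase n) : Phase n :=
  (0, fun α => -∑ β, Winv p α β * Lsu L β p, 1)

/-- The Lagrangian energy `E_L = u^α ∂L/∂u^α − L`. -/
def EnergyL (p : Phase n) : ℝ :=
  (∑ α, p.2.1 α * fderiv ℝ L p (eu' α)) - L p

lemma dir_decomp {n : ℕ} (a : Fin n → ℝ) :
    ((0, a, 1) : Phase n) = (∑ α, a α • eu' α) + es' := by
  have h1 : (∑ α, a α • eu' α : Phase n) = (0, a, 0) := by
    refine Prod.ext ?_ (Prod.ext ?_ ?_)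
    · simp [eu', Prod.fst_sum, Prod.snd_sum]
    · funext x
      simp [eu', Prod.fst_sum, Prod.snd_sum, Finset.sum_apply, Pi.single_apply, mul_ite]
    · simp [eu', Prod.fst_sum, Prod.snd_sum]
  rw [h1]; simp [es', Prod.ext_iff]

lemma eval_dir {n : ℕ} (φ : Phase n →L[ℝ] ℝ) (a : Fin n → ℝ) :
    φ (0, a, 1) = (∑ α, a α * φ (eu' α)) + φ es' := by
  rw [dir_decomp a, map_add, map_sum]
  simp [smul_eq_mul]

/-- coordinate projection `p ↦ p.2.1 α` as a CLM -/
def coordU {n : ℕ} (α : Fin n) : Phase n →L[ℝ] ℝ :=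
  (ContinuousLinearMap.proj α).comp
    ((ContinuousLinearMap.fst ℝ (Fin n → ℝ) ℝ).comp
      (ContinuousLinearMap.snd ℝ (Fin n → ℝ) ((Fin n → ℝ) × ℝ)))


/-- the Reeb field applied to the energy gives `R_L(E_L) = −∂L/∂s`. -/
theorem reeb_of_energy
    (hL : ContDiff ℝ (⊤ : ℕ∞) L)
    (Winv : Phase n → Matrix (Fin n) (Fin n) ℝ)
    (hWinv : ∀ p, Winv p * Hess L p = 1 ∧ Hess L p * Winv p = 1) :
    ∀ p : Phase n,
      fderiv ℝ (EnergyL L) p (ReebL L Winv p) = -(fderiv ℝ L p es') := by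
  intro p
  set f : Fin n → Phase n → ℝ := fun α p' => fderiv ℝ L p' (eu' α) with hf
  have hLd : Differentiable ℝ L := hL.differentiable (by simp)
  have hfd : ∀ α, DifferentiableAt ℝ (f α) p := by
    intro α
    have h1 : ContDiff ℝ (⊤ : ℕ∞) (fderiv ℝ L) := hL.fderiv_right (by simp)
    exact ((h1.clm_apply contDiff_const).differentiable (by simp)).differentiableAt
  -- derivative of EnergyL at p
  have hD : HasFDerivAt (EnergyL L)
      ((∑ α, (coordU α p • fderiv ℝ (f α) p + f α p • coordU α)) - fderiv ℝ L p) p := by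
    have hsum : HasFDerivAt (fun p' => ∑ α, p'.2.1 α * f α p')
        (∑ α, (coordU α p • fderiv ℝ (f α) p + f α p • coordU α)) p := by
      apply HasFDerivAt.fun_sum
      intro α _
      have h1 : HasFDerivAt (fun p' : Phase n => p'.2.1 α) (coordU α) p :=
        (coordU α).hasFDerivAt
      exact h1.mul (hfd α).hasFDerivAt
    exact hsum.sub (hLd p).hasFDerivAt
  rw [hD.fderiv]
  -- evaluate
  set a : Fin n → ℝ := fun α => -∑ β, Winv p α β * Lsu L β p with ha
  have hv : ReebL L Winv p = (0, a, 1) := rfl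
  rw [hv]
  have hcoord : ∀ α, coordU α ((0, a, 1) : Phase n) = a α := fun α => rfl
  have hfα : ∀ α, fderiv ℝ (f α) p ((0, a, 1) : Phase n)
      = (∑ β, a β * Hess L p α β) + Lsu L α p := by
    intro α
    rw [eval_dir]
    rfl
  have hLv : fderiv ℝ L p ((0, a, 1) : Phase n)
      = (∑ α, a α * f α p) + fderiv ℝ L p es' := eval_dir _ a
  -- key cancellation
  have key : ∀ α, (∑ β, a β * Hess L p α β) + Lsu L α p = 0 := by
    intro α
    have h1 : ∀ γ, ∑ β, Hess L p α β * Winv p β γ = if α = γ then 1 else 0 := by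
      intro γ
      have h2 := (hWinv p).2
      have h3 : (Hess L p * Winv p) α γ = (1 : Matrix (Fin n) (Fin n) ℝ) α γ := by rw [h2]
      rw [Matrix.mul_apply] at h3
      rw [h3, Matrix.one_apply]
    have h4 : ∑ β, a β * Hess L p α β
        = -∑ γ, (∑ β, Hess L p α β * Winv p β γ) * Lsu L γ p := by
      rw [ha]
      simp only [neg_mul, Finset.sum_neg_distrib, Finset.sum_mul, Finset.mul_sum, neg_inj]
      rw [Finset.sum_comm]
      congr 1; funext γ; congr 1; funext β; ring
    rw [h4]
    simp [h1]
  simp only [ContinuousLinearMap.coe_sub', Pi.sub_apply, ContinuousLinearMap.sum_apply,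
    ContinuousLinearMap.add_apply, ContinuousLinearMap.coe_smul', Pi.smul_apply,
    smul_eq_mul, hcoord, hfα, hLv]
  have : ∀ α, coordU α p = p.2.1 α := fun _ => rfl
  simp only [this]
  rw [Finset.sum_add_distrib]
  have h5 : ∑ α, p.2.1 α * ((∑ β, a β * Hess L p α β) + Lsu L α p) = 0 := by
    simp [key]
  rw [h5]
  have h6 : ∑ α, f α p * a α = ∑ α, a α * f α p :=
    Finset.sum_congr rfl (fun α _ => mul_comm _ _)
  rw [h6]
  ring

end
end

section
/- Let Γ be a SODE on TQ × ℝ and L a regular Lagrangian. If the Lie derivative L_Γ η_L = (∂L/∂s) η_L and η_L(Γ) = −E_L hold, then for every vector field Z on Q one has Γ(Z^V(L)) − Z^C(L) = (∂L/∂s) Z^V(L). -/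
noncomputable section

/-- A vector field on `Q ≅ ℝⁿ`. -/
abbrev VF (n : ℕ) := (Fin n → ℝ) → (Fin n → ℝ)

variable {n : ℕ} (L : Phase n → ℝ)

/-- Evaluation of the contact form `η_L = ds − (∂L/∂u^α) dq^α` on a tangent vector. -/
def etaEval (p : Phase n) (v : Phase n) : ℝ :=
  v.2.2 - ∑ α, fderiv ℝ L p (eu' α) * v.1 α

/-- The Lie derivative of the 1-form `η_L` along a vector field `Γ` on `TQ × ℝ`,
evaluated at `p` on a tangent vector `v`:
`(L_Γ η_L)_p(v) = D_{Γ(p)}(η_L(·)(v)) + η_L(p)(DΓ(p)(v))`. -/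
def lieDerEta (Γ : Phase n → Phase n) (p v : Phase n) : ℝ :=
  fderiv ℝ (fun p' => etaEval L p' v) p (Γ p) + etaEval L p (fderiv ℝ Γ p v)

/-- Vertical lift of `Z ∈ 𝔛(Q)` to `TQ × ℝ`. -/
def ZVert (Z : VF n) (p : Phase n) : Phase n := (0, Z p.1, 0)
/-- Complete lift of `Z ∈ 𝔛(Q)` to `TQ × ℝ` (acting trivially in the `s` direction). -/
def ZComp (Z : VF n) (p : Phase n) : Phase n := (Z p.1, fderiv ℝ Z p.1 p.2.1, 0)


/-! ### Auxiliary material for the proof -/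

/-- coordinate basis vector `∂/∂q^α`. -/
def qe' {n : ℕ} (α : Fin n) : Phase n := (Pi.single α 1, 0, 0)

lemma sum_single' {n : ℕ} (v : Fin n → ℝ) :
    ∑ α, v α • (Pi.single α 1 : Fin n → ℝ) = v := by
  have : ∀ α : Fin n, v α • (Pi.single α 1 : Fin n → ℝ) = Pi.single α (v α) := by
    intro α; rw [← Pi.single_smul]; simp
  simp only [this, Finset.univ_sum_single]

lemma vert_decomp {n : ℕ} (v : Fin n → ℝ) :
    ((0 : Fin n → ℝ), v, (0:ℝ)) = ∑ α, v α • eu' α := by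
  simp only [eu', Prod.smul_mk, smul_zero]
  rw [Prod.ext_iff, Prod.ext_iff]
  refine ⟨by simp [Prod.fst_sum], by simp [Prod.snd_sum, Prod.fst_sum, sum_single' v],
    by simp [Prod.snd_sum]⟩

lemma full_decomp {n : ℕ} (a b : Fin n → ℝ) :
    ((a, b, (0:ℝ)) : Phase n) = (∑ α, a α • qe' α) + ∑ α, b α • eu' α := by
  simp only [eu', qe', Prod.smul_mk, smul_zero]
  rw [Prod.ext_iff, Prod.ext_iff]
  refine ⟨by simp [Prod.fst_sum, sum_single' a],
    by simp [Prod.snd_sum, Prod.fst_sum, sum_single' b], by simp [Prod.snd_sum]⟩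

lemma clm_vert {n : ℕ} (D : Phase n →L[ℝ] ℝ) (v : Fin n → ℝ) :
    D (0, v, 0) = ∑ α, v α * D (eu' α) := by
  rw [vert_decomp, map_sum]; simp

lemma clm_full {n : ℕ} (D : Phase n →L[ℝ] ℝ) (a b : Fin n → ℝ) :
    D (a, b, 0) = (∑ α, a α * D (qe' α)) + ∑ α, b α * D (eu' α) := by
  rw [full_decomp, map_add, map_sum, map_sum]; simp

section Aux
variable {n : ℕ} (L : Phase n → ℝ) (Γ : Phase n → Phase n)

lemma gamma_s (hSODE : ∀ p : Phase n, (Γ p).1 = p.2.1)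
    (hEnergy : ∀ p : Phase n, etaEval L p (Γ p) = -EnergyL L p)
    (p : Phase n) : (Γ p).2.2 = L p := by
  have h := hEnergy p
  simp only [etaEval, EnergyL, hSODE p] at h
  have : ∀ α, fderiv ℝ L p (eu' α) * p.2.1 α = p.2.1 α * fderiv ℝ L p (eu' α) :=
    fun α => mul_comm _ _
  rw [Finset.sum_congr rfl (fun α _ => this α)] at h
  linarith

lemma fderiv_gamma_fst (hΓsmooth : ContDiff ℝ (⊤ : ℕ∞) Γ)
    (hSODE : ∀ p : Phase n, (Γ p).1 = p.2.1) (p v : Phase n) :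
    (fderiv ℝ Γ p v).1 = v.2.1 := by
  have hd := (hΓsmooth.differentiable (by simp) p).hasFDerivAt
  have h1 := hd.fst
  have h2 : (fun p : Phase n => (Γ p).1) = fun p : Phase n => p.2.1 := funext hSODE
  rw [h2] at h1
  have h3 : HasFDerivAt (fun p : Phase n => p.2.1)
      ((ContinuousLinearMap.fst ℝ (Fin n → ℝ) ℝ).comp
        (ContinuousLinearMap.snd ℝ (Fin n → ℝ) ((Fin n → ℝ) × ℝ))) p :=
    ((ContinuousLinearMap.fst ℝ (Fin n → ℝ) ℝ).comp
        (ContinuousLinearMap.snd ℝ (Fin n → ℝ) ((Fin n → ℝ) × ℝ))).hasFDerivAt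
  have := h1.unique h3
  calc (fderiv ℝ Γ p v).1
      = ((ContinuousLinearMap.fst ℝ (Fin n → ℝ) ((Fin n → ℝ) × ℝ)).comp (fderiv ℝ Γ p)) v := rfl
    _ = v.2.1 := by rw [this]; rfl

lemma fderiv_gamma_s (hΓsmooth : ContDiff ℝ (⊤ : ℕ∞) Γ)
    (hSODE : ∀ p : Phase n, (Γ p).1 = p.2.1)
    (hEnergy : ∀ p : Phase n, etaEval L p (Γ p) = -EnergyL L p) (p v : Phase n) :
    (fderiv ℝ Γ p v).2.2 = fderiv ℝ L p v := by
  have hd := (hΓsmooth.differentiable (by simp) p).hasFDerivAt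
  have h1 := hd.snd.snd
  have h2 : (fun p : Phase n => (Γ p).2.2) = L := funext (gamma_s L Γ hSODE hEnergy)
  rw [h2] at h1
  calc (fderiv ℝ Γ p v).2.2
      = ((ContinuousLinearMap.snd ℝ (Fin n → ℝ) ℝ).comp
          ((ContinuousLinearMap.snd ℝ (Fin n → ℝ) ((Fin n → ℝ) × ℝ)).comp (fderiv ℝ Γ p))) v := rfl
    _ = fderiv ℝ L p v := by rw [h1.fderiv]

lemma phi_smooth (hL : ContDiff ℝ (⊤ : ℕ∞) L) (α : Fin n) :
    ContDiff ℝ (⊤ : ℕ∞) (fun p => fderiv ℝ L p (eu' α)) :=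
  (hL.fderiv_right (by simp)).clm_apply contDiff_const

lemma key (hL : ContDiff ℝ (⊤ : ℕ∞) L) (hΓsmooth : ContDiff ℝ (⊤ : ℕ∞) Γ)
    (hSODE : ∀ p : Phase n, (Γ p).1 = p.2.1)
    (hLie : ∀ p v : Phase n, lieDerEta L Γ p v = fderiv ℝ L p es' * etaEval L p v)
    (hEnergy : ∀ p : Phase n, etaEval L p (Γ p) = -EnergyL L p)
    (p : Phase n) (α : Fin n) :
    fderiv ℝ (fun p' => fderiv ℝ L p' (eu' α)) p (Γ p)
      = fderiv ℝ L p (qe' α) + fderiv ℝ L p es' * fderiv ℝ L p (eu' α) := by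
  have h := hLie p (qe' α)
  have e1 : (fun p' => etaEval L p' (qe' α)) = fun p' => -(fderiv ℝ L p' (eu' α)) := by
    funext p'
    simp [etaEval, qe', Pi.single_apply, mul_ite, Finset.sum_ite_eq']
  simp only [lieDerEta] at h
  rw [e1, fderiv_fun_neg] at h
  have e2 : etaEval L p (fderiv ℝ Γ p (qe' α)) = fderiv ℝ L p (qe' α) := by
    simp only [etaEval, fderiv_gamma_s L Γ hΓsmooth hSODE hEnergy,
      fderiv_gamma_fst Γ hΓsmooth hSODE]
    simp [qe']
  rw [e2, show etaEval L p (qe' α) = -(fderiv ℝ L p (eu' α)) from congrFun e1 p] at h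
  simp only [ContinuousLinearMap.neg_apply] at h
  linarith [h]

end Aux

/-- if a SODE `Γ` satisfies `L_Γ η_L = (∂L/∂s) η_L` and
`η_L(Γ) = −E_L` (with `L` regular), then for every vector field `Z` on `Q`,
`Γ(Z^V(L)) − Z^C(L) = (∂L/∂s) Z^V(L)`. -/
theorem lagrangian_sode_herglotz
    (hL : ContDiff ℝ (⊤ : ℕ∞) L)
    (hreg : ∀ p : Phase n, (Hess L p).det ≠ 0)
    (Γ : Phase n → Phase n) (hΓsmooth : ContDiff ℝ (⊤ : ℕ∞) Γ)
    (hSODE : ∀ p : Phase n, (Γ p).1 = p.2.1)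
    (hLie : ∀ p v : Phase n, lieDerEta L Γ p v = fderiv ℝ L p es' * etaEval L p v)
    (hEnergy : ∀ p : Phase n, etaEval L p (Γ p) = -EnergyL L p) :
    ∀ Z : VF n, ContDiff ℝ (⊤ : ℕ∞) Z → ∀ p : Phase n,
      fderiv ℝ (fun p' => fderiv ℝ L p' (ZVert Z p')) p (Γ p)
        - fderiv ℝ L p (ZComp Z p)
      = fderiv ℝ L p es' * fderiv ℝ L p (ZVert Z p) := by
  intro Z hZ p
  set φ : Fin n → Phase n → ℝ := fun α p' => fderiv ℝ L p' (eu' α) with hφ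
  set ζ : Fin n → Phase n → ℝ := fun α p' => Z p'.1 α with hζ
  have hφs : ∀ α, ContDiff ℝ (⊤ : ℕ∞) (φ α) := fun α => phi_smooth L hL α
  have hζs : ∀ α, ContDiff ℝ (⊤ : ℕ∞) (ζ α) := fun α =>
    ((ContinuousLinearMap.proj (R := ℝ) (φ := fun _ : Fin n => ℝ) α).contDiff.comp hZ).comp
      contDiff_fst
  have e1 : (fun p' => fderiv ℝ L p' (ZVert Z p')) = fun p' => ∑ α, ζ α p' * φ α p' := by
    funext p'
    exact clm_vert (fderiv ℝ L p') (Z p'.1)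
  rw [e1]
  have hdiff : ∀ α ∈ Finset.univ, DifferentiableAt ℝ (fun p' => ζ α p' * φ α p') p :=
    fun α _ => ((hζs α).differentiable (by simp) p).mul ((hφs α).differentiable (by simp) p)
  rw [fderiv_fun_sum hdiff, ContinuousLinearMap.sum_apply]
  have eprod : ∀ α : Fin n, fderiv ℝ (fun p' => ζ α p' * φ α p') p (Γ p)
      = ζ α p * fderiv ℝ (φ α) p (Γ p) + φ α p * fderiv ℝ (ζ α) p (Γ p) := by
    intro α
    rw [fderiv_fun_mul ((hζs α).differentiable (by simp) p) ((hφs α).differentiable (by simp) p)]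
    simp [mul_comm]
  simp only [eprod]
  have hzc : ∀ α : Fin n, fderiv ℝ (ζ α) p (Γ p) = (fderiv ℝ Z p.1 p.2.1) α := by
    intro α
    have hdZ := (hZ.differentiable (by simp) p.1).hasFDerivAt
    have h1 : HasFDerivAt (fun q' => Z q' α)
        ((ContinuousLinearMap.proj (R := ℝ) (φ := fun _ : Fin n => ℝ) α).comp
          (fderiv ℝ Z p.1)) p.1 :=
      (ContinuousLinearMap.proj (R := ℝ) (φ := fun _ : Fin n => ℝ) α).hasFDerivAt.comp p.1 hdZ
    have h2 : HasFDerivAt (ζ α)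
        (((ContinuousLinearMap.proj (R := ℝ) (φ := fun _ : Fin n => ℝ) α).comp
          (fderiv ℝ Z p.1)).comp
          (ContinuousLinearMap.fst ℝ (Fin n → ℝ) ((Fin n → ℝ) × ℝ))) p :=
      h1.comp p hasFDerivAt_fst
    rw [h2.fderiv]
    simp [hSODE p]
  simp only [hzc, key L Γ hL hΓsmooth hSODE hLie hEnergy p]
  have e2 : fderiv ℝ L p (ZComp Z p)
      = (∑ α, Z p.1 α * fderiv ℝ L p (qe' α)) + ∑ α, (fderiv ℝ Z p.1 p.2.1) α * φ α p :=
    clm_full (fderiv ℝ L p) (Z p.1) (fderiv ℝ Z p.1 p.2.1)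
  have e3 : fderiv ℝ L p (ZVert Z p) = ∑ α, Z p.1 α * φ α p :=
    clm_vert (fderiv ℝ L p) (Z p.1)
  rw [e2, e3, Finset.mul_sum, ← Finset.sum_add_distrib, ← Finset.sum_sub_distrib]
  apply Finset.sum_congr rfl
  intro α _
  rw [show fderiv ℝ (φ α) p (Γ p) = _ from key L Γ hL hΓsmooth hSODE hLie hEnergy p α]
  simp only [hζ]
  ring


end
end

section
/- Let Γ = v^α Z^C_α + Γ^α Z^V_α + L ∂/∂s be a Herglotz SODE written in a G-invariant local frame {Z_α} on Q, with G-invariant regular Lagrangian L. Then each coefficient function Γ^α is G-invariant, and hence the Herglotz vector field Γ is G-invariant: [ξ_{TQ×ℝ}, Γ] = 0 for all ξ ∈ 𝔤. -/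
open Matrix

noncomputable section

/-- Lie bracket of vector fields on a normed space. -/
def lieBracket {E : Type*} [NormedAddCommGroup E] [NormedSpace ℝ E]
    (X Y : E → E) : E → E :=
  fun q => fderiv ℝ Y q (X q) - fderiv ℝ X q (Y q)

variable {n : ℕ}

section Helpers

variable {E F : Type*} [NormedAddCommGroup E] [NormedSpace ℝ E]
  [NormedAddCommGroup F] [NormedSpace ℝ F]

lemma second_symm {f : E → F} (hf : ContDiff ℝ (⊤ : ℕ∞) f) (x v w : E) :
    fderiv ℝ (fderiv ℝ f) x v w = fderiv ℝ (fderiv ℝ f) x w v :=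
  second_derivative_symmetric (fun y => (hf.differentiable (by simp) y).hasFDerivAt)
    (((hf.fderiv_right (m := (⊤ : ℕ∞)) (by simp)).differentiable (by simp) x).hasFDerivAt) v w

lemma bracket_fn {f : E → ℝ} (hf : ContDiff ℝ (⊤ : ℕ∞) f) {X Y : E → E} {p : E}
    (hX : DifferentiableAt ℝ X p) (hY : DifferentiableAt ℝ Y p) :
    fderiv ℝ (fun q => fderiv ℝ f q (Y q)) p (X p)
      - fderiv ℝ (fun q => fderiv ℝ f q (X q)) p (Y p)
      = fderiv ℝ f p (lieBracket X Y p) := by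
  have hdf : DifferentiableAt ℝ (fderiv ℝ f) p :=
    (hf.fderiv_right (m := (⊤ : ℕ∞)) (by simp)).differentiable (by simp) p
  rw [fderiv_clm_apply hdf hY, fderiv_clm_apply hdf hX]
  simp only [ContinuousLinearMap.add_apply, ContinuousLinearMap.coe_comp',
    Function.comp_apply, ContinuousLinearMap.flip_apply]
  rw [second_symm hf p (X p) (Y p)]
  unfold lieBracket
  rw [map_sub]
  ring

lemma lieBracket_add_right {X Y W : E → E} {p : E}
    (hY : DifferentiableAt ℝ Y p) (hW : DifferentiableAt ℝ W p) :
    lieBracket X (fun q => Y q + W q) p = lieBracket X Y p + lieBracket X W p := by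
  unfold lieBracket
  rw [fderiv_fun_add hY hW]
  simp only [ContinuousLinearMap.add_apply, map_add]
  abel

lemma lieBracket_sum_right {ι : Type*} {X : E → E} (s : Finset ι) (Y : ι → E → E) {p : E}
    (h : ∀ a ∈ s, DifferentiableAt ℝ (Y a) p) :
    lieBracket X (fun q => ∑ a ∈ s, Y a q) p = ∑ a ∈ s, lieBracket X (Y a) p := by
  unfold lieBracket
  rw [fderiv_fun_sum h]
  simp only [ContinuousLinearMap.coe_sum', Finset.sum_apply, map_sum]
  rw [Finset.sum_sub_distrib]

lemma lieBracket_smul_right {X Y : E → E} {f : E → ℝ} {p : E}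
    (hf : DifferentiableAt ℝ f p) (hY : DifferentiableAt ℝ Y p) :
    lieBracket X (fun q => f q • Y q) p
      = fderiv ℝ f p (X p) • Y p + f p • lieBracket X Y p := by
  unfold lieBracket
  rw [fderiv_fun_smul hf hY]
  simp only [ContinuousLinearMap.add_apply, ContinuousLinearMap.coe_smul',
    Pi.smul_apply, ContinuousLinearMap.smulRight_apply, _root_.map_smul, smul_sub]
  abel

end Helpers

section PhaseHelpers
variable {n : ℕ}

lemma contDiff_ZComp {X : VF n} (hX : ContDiff ℝ (⊤ : ℕ∞) X) : ContDiff ℝ (⊤ : ℕ∞) (ZComp X) := by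
  unfold ZComp
  exact (hX.comp contDiff_fst).prodMk
    ((ContDiff.clm_apply ((hX.fderiv_right (by simp)).comp contDiff_fst)
      (contDiff_fst.comp contDiff_snd)).prodMk contDiff_const)

lemma contDiff_ZVert {X : VF n} (hX : ContDiff ℝ (⊤ : ℕ∞) X) : ContDiff ℝ (⊤ : ℕ∞) (ZVert X) := by
  unfold ZVert
  exact contDiff_const.prodMk ((hX.comp contDiff_fst).prodMk contDiff_const)

lemma fderiv_ZVert {X : VF n} (hX : ContDiff ℝ (⊤ : ℕ∞) X) (p w : Phase n) :
    fderiv ℝ (ZVert X) p w = (0, fderiv ℝ X p.1 w.1, 0) := by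
  have h1 : HasFDerivAt (fun p : Phase n => X p.1)
      ((fderiv ℝ X p.1).comp (ContinuousLinearMap.fst ℝ (Fin n → ℝ) ((Fin n → ℝ) × ℝ))) p :=
    ((hX.differentiable (by simp) p.1).hasFDerivAt).comp p hasFDerivAt_fst
  have h5 : HasFDerivAt (ZVert X)
      ((0 : Phase n →L[ℝ] (Fin n → ℝ)).prod
        (((fderiv ℝ X p.1).comp (ContinuousLinearMap.fst ℝ (Fin n → ℝ) ((Fin n → ℝ) × ℝ))).prod
          (0 : Phase n →L[ℝ] ℝ))) p :=
    (hasFDerivAt_const (0 : Fin n → ℝ) p).prodMk (h1.prodMk (hasFDerivAt_const (0 : ℝ) p))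
  rw [h5.fderiv]
  simp [ContinuousLinearMap.prod_apply]

lemma fderiv_ZComp {X : VF n} (hX : ContDiff ℝ (⊤ : ℕ∞) X) (p w : Phase n) :
    fderiv ℝ (ZComp X) p w
      = (fderiv ℝ X p.1 w.1,
         fderiv ℝ X p.1 w.2.1 + fderiv ℝ (fderiv ℝ X) p.1 w.1 p.2.1, 0) := by
  have h1 : HasFDerivAt (fun p : Phase n => X p.1)
      ((fderiv ℝ X p.1).comp (ContinuousLinearMap.fst ℝ (Fin n → ℝ) ((Fin n → ℝ) × ℝ))) p :=
    ((hX.differentiable (by simp) p.1).hasFDerivAt).comp p hasFDerivAt_fst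
  have h2 : HasFDerivAt (fun p : Phase n => fderiv ℝ X p.1)
      ((fderiv ℝ (fderiv ℝ X) p.1).comp (ContinuousLinearMap.fst ℝ (Fin n → ℝ) ((Fin n → ℝ) × ℝ))) p :=
    (((hX.fderiv_right (m := (⊤ : ℕ∞)) (by simp)).differentiable (by simp) p.1).hasFDerivAt).comp p hasFDerivAt_fst
  have h3 : HasFDerivAt (fun p : Phase n => p.2.1)
      ((ContinuousLinearMap.fst ℝ (Fin n → ℝ) ℝ).comp
        (ContinuousLinearMap.snd ℝ (Fin n → ℝ) ((Fin n → ℝ) × ℝ))) p :=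
    ((ContinuousLinearMap.fst ℝ (Fin n → ℝ) ℝ).comp
        (ContinuousLinearMap.snd ℝ (Fin n → ℝ) ((Fin n → ℝ) × ℝ))).hasFDerivAt
  have h4 := h2.clm_apply h3
  have h5 : HasFDerivAt (ZComp X) _ p := h1.prodMk (h4.prodMk (hasFDerivAt_const (0 : ℝ) p))
  rw [h5.fderiv]
  simp [ContinuousLinearMap.prod_apply]

lemma bracket_deriv {X W : VF n} (hX : ContDiff ℝ (⊤ : ℕ∞) X) (hW : ContDiff ℝ (⊤ : ℕ∞) W)
    (hinv : lieBracket X W = 0) (q u : Fin n → ℝ) :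
    fderiv ℝ W q (fderiv ℝ X q u) + fderiv ℝ (fderiv ℝ W) q (X q) u
      = fderiv ℝ X q (fderiv ℝ W q u) + fderiv ℝ (fderiv ℝ X) q (W q) u := by
  have heq : (fun r => fderiv ℝ W r (X r)) = (fun r => fderiv ℝ X r (W r)) := by
    funext r
    have h := congrFun hinv r
    simp only [lieBracket, Pi.zero_apply] at h
    exact sub_eq_zero.mp h
  have hdW : DifferentiableAt ℝ (fderiv ℝ W) q := (hW.fderiv_right (m := (⊤ : ℕ∞)) (by simp)).differentiable (by simp) q
  have hdX : DifferentiableAt ℝ (fderiv ℝ X) q := (hX.fderiv_right (m := (⊤ : ℕ∞)) (by simp)).differentiable (by simp) q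
  have h3 : fderiv ℝ (fun r => fderiv ℝ W r (X r)) q
      = fderiv ℝ (fun r => fderiv ℝ X r (W r)) q := by rw [heq]
  rw [fderiv_clm_apply hdW (hX.differentiable (by simp) q),
      fderiv_clm_apply hdX (hW.differentiable (by simp) q)] at h3
  have h4 := congrFun (congrArg DFunLike.coe h3) u
  simp only [ContinuousLinearMap.add_apply, ContinuousLinearMap.coe_comp',
    Function.comp_apply, ContinuousLinearMap.flip_apply] at h4
  rwa [second_symm hW q u (X q), second_symm hX q u (W q)] at h4

end PhaseHelpers

section DotHelpers
variable {n : ℕ} {E : Type*} [NormedAddCommGroup E] [NormedSpace ℝ E]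

lemma contDiff_dot {f g : E → Fin n → ℝ} (hf : ContDiff ℝ (⊤ : ℕ∞) f) (hg : ContDiff ℝ (⊤ : ℕ∞) g) :
    ContDiff ℝ (⊤ : ℕ∞) fun x => f x ⬝ᵥ g x := by
  simp only [dotProduct]
  exact ContDiff.sum fun i _ =>
    (((ContinuousLinearMap.proj i : (Fin n → ℝ) →L[ℝ] ℝ)).contDiff.comp hf).mul
      (((ContinuousLinearMap.proj i : (Fin n → ℝ) →L[ℝ] ℝ)).contDiff.comp hg)

lemma fderiv_dot {f g : E → Fin n → ℝ} {x : E}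
    (hf : DifferentiableAt ℝ f x) (hg : DifferentiableAt ℝ g x) (w : E) :
    fderiv ℝ (fun y => f y ⬝ᵥ g y) x w = fderiv ℝ f x w ⬝ᵥ g x + f x ⬝ᵥ fderiv ℝ g x w := by
  have hfi : ∀ i : Fin n, HasFDerivAt (fun y => f y i)
      ((ContinuousLinearMap.proj i : (Fin n → ℝ) →L[ℝ] ℝ).comp (fderiv ℝ f x)) x :=
    fun i => (ContinuousLinearMap.proj i :
      (Fin n → ℝ) →L[ℝ] ℝ).hasFDerivAt.comp x hf.hasFDerivAt
  have hgi : ∀ i : Fin n, HasFDerivAt (fun y => g y i)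
      ((ContinuousLinearMap.proj i : (Fin n → ℝ) →L[ℝ] ℝ).comp (fderiv ℝ g x)) x :=
    fun i => (ContinuousLinearMap.proj i :
      (Fin n → ℝ) →L[ℝ] ℝ).hasFDerivAt.comp x hg.hasFDerivAt
  have h : HasFDerivAt (fun y => f y ⬝ᵥ g y)
      (∑ i : Fin n, (f x i • ((ContinuousLinearMap.proj i :
          (Fin n → ℝ) →L[ℝ] ℝ).comp (fderiv ℝ g x))
        + g x i • ((ContinuousLinearMap.proj i :
          (Fin n → ℝ) →L[ℝ] ℝ).comp (fderiv ℝ f x)))) x := by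
    simp only [dotProduct]
    exact HasFDerivAt.fun_sum fun i _ => (hfi i).mul (hgi i)
  rw [h.fderiv]
  simp only [ContinuousLinearMap.coe_sum', Finset.sum_apply, ContinuousLinearMap.add_apply,
    ContinuousLinearMap.coe_smul', Pi.smul_apply, ContinuousLinearMap.coe_comp',
    Function.comp_apply, ContinuousLinearMap.proj_apply, smul_eq_mul, dotProduct]
  rw [Finset.sum_add_distrib, add_comm]
  congr 1
  exact Finset.sum_congr rfl fun i _ => mul_comm _ _

end DotHelpers

section BracketZero
variable {n : ℕ}

lemma bracket_ZComp_ZVert {X W : VF n} (hX : ContDiff ℝ (⊤ : ℕ∞) X) (hW : ContDiff ℝ (⊤ : ℕ∞) W)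
    (hinv : lieBracket X W = 0) (p : Phase n) :
    lieBracket (ZComp X) (ZVert W) p = 0 := by
  have hb := congrFun hinv p.1
  simp only [lieBracket, Pi.zero_apply] at hb
  have hb' : fderiv ℝ W p.1 (X p.1) = fderiv ℝ X p.1 (W p.1) := sub_eq_zero.mp hb
  show fderiv ℝ (ZVert W) p (ZComp X p) - fderiv ℝ (ZComp X) p (ZVert W p) = 0
  rw [fderiv_ZVert hW, fderiv_ZComp hX]
  simp [ZComp, ZVert, hb', Prod.ext_iff]

lemma bracket_ZComp_ZComp {X W : VF n} (hX : ContDiff ℝ (⊤ : ℕ∞) X) (hW : ContDiff ℝ (⊤ : ℕ∞) W)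
    (hinv : lieBracket X W = 0) (p : Phase n) :
    lieBracket (ZComp X) (ZComp W) p = 0 := by
  have hb := congrFun hinv p.1
  simp only [lieBracket, Pi.zero_apply] at hb
  have hb' : fderiv ℝ W p.1 (X p.1) = fderiv ℝ X p.1 (W p.1) := sub_eq_zero.mp hb
  have hd := bracket_deriv hX hW hinv p.1 p.2.1
  show fderiv ℝ (ZComp W) p (ZComp X p) - fderiv ℝ (ZComp X) p (ZComp W p) = 0
  rw [fderiv_ZComp hW, fderiv_ZComp hX]
  simp only [ZComp, Prod.ext_iff, Prod.fst_sub, Prod.snd_sub, sub_eq_zero]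
  refine ⟨hb', ?_, trivial⟩
  exact hd

lemma bracket_ZComp_const {X : VF n} (hX : ContDiff ℝ (⊤ : ℕ∞) X) (p : Phase n) :
    lieBracket (ZComp X) (fun _ => ((0, 0, 1) : Phase n)) p = 0 := by
  show fderiv ℝ (fun _ => ((0, 0, 1) : Phase n)) p (ZComp X p)
      - fderiv ℝ (ZComp X) p ((0, 0, 1) : Phase n) = 0
  rw [fderiv_ZComp hX]
  simp

end BracketZero

/-- let `Γ = v^α Z^C_α + Γ^α Z^V_α + L ∂/∂s` be a Herglotz SODE
written in a `G`-invariant local frame `{Z_α}` on `Q`, with `G`-invariant regular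
Lagrangian `L`.  Then each coefficient `Γ^α` is `G`-invariant (killed by the
fundamental vector fields `ξ^C` of the lifted action), and hence `Γ` itself is
`G`-invariant: `[ξ_{TQ×ℝ}, Γ] = 0`. -/
theorem herglotz_sode_invariant {ι : Type*}
    (L : Phase n → ℝ) (hL : ContDiff ℝ (⊤ : ℕ∞) L)
    -- a `G`-invariant frame `{Z_α}` with dual coframe `{θ^α}` and quasi-velocities
    (Z : Fin n → VF n) (hZ : ∀ α, ContDiff ℝ (⊤ : ℕ∞) (Z α))
    (θ : Fin n → (Fin n → ℝ) → (Fin n → ℝ)) (hθ : ∀ α, ContDiff ℝ (⊤ : ℕ∞) (θ α))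
    (hframe : ∀ q, LinearIndependent ℝ (fun α => Z α q))
    (hdual : ∀ q α β, θ α q ⬝ᵥ Z β q = if α = β then 1 else 0)
    -- the fundamental vector fields `ξ_Q` of the (connected) symmetry group
    (ξ : ι → VF n) (hξ : ∀ i, ContDiff ℝ (⊤ : ℕ∞) (ξ i))
    -- the frame is `G`-invariant: `[ξ_Q, Z_α] = 0`
    (hZinv : ∀ i α, lieBracket (ξ i) (Z α) = 0)
    -- the Lagrangian is `G`-invariant: `ξ_Q^C(L) = 0`
    (hLinv : ∀ i p, fderiv ℝ L p (ZComp (ξ i) p) = 0)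
    -- `L` is regular: the matrix `Z^V_β(Z^V_α(L))` is everywhere nonsingular
    (hreg : ∀ p, (Matrix.of fun α β =>
      fderiv ℝ (fun p' => fderiv ℝ L p' (ZVert (Z β) p')) p (ZVert (Z α) p)).det ≠ 0)
    -- the SODE `Γ = v^α Z^C_α + Γ^α Z^V_α + L ∂/∂s`, with quasi-velocities
    -- `v^α(q,u,s) = θ^α_q(u)`
    (Γcoef : Fin n → Phase n → ℝ) (hΓcoef : ∀ α, ContDiff ℝ (⊤ : ℕ∞) (Γcoef α))
    (Γ : Phase n → Phase n)
    (hΓ : ∀ p, Γ p = (∑ α, (θ α p.1 ⬝ᵥ p.2.1) • ZComp (Z α) p)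
        + (∑ α, Γcoef α p • ZVert (Z α) p) + L p • ((0, 0, 1) : Phase n))
    -- `Γ` is a Herglotz SODE: `Γ(Z_α^V(L)) − Z_α^C(L) = (∂L/∂s) Z_α^V(L)`
    (hHerglotz : ∀ α p,
      fderiv ℝ (fun p' => fderiv ℝ L p' (ZVert (Z α) p')) p (Γ p)
          - fderiv ℝ L p (ZComp (Z α) p)
        = fderiv ℝ L p ((0, 0, 1) : Phase n) * fderiv ℝ L p (ZVert (Z α) p)) :
    -- the coefficients `Γ^α` are `G`-invariant ...
    (∀ i α p, fderiv ℝ (Γcoef α) p (ZComp (ξ i) p) = 0) ∧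
    -- ... and hence the Herglotz vector field is `G`-invariant
    (∀ i, lieBracket (ZComp (ξ i)) Γ = 0) := by
  classical
  have hξCd : ∀ i, ContDiff ℝ (⊤ : ℕ∞) (ZComp (ξ i)) := fun i => contDiff_ZComp (hξ i)
  have hZCd : ∀ α, ContDiff ℝ (⊤ : ℕ∞) (ZComp (Z α)) := fun α => contDiff_ZComp (hZ α)
  have hZVd : ∀ α, ContDiff ℝ (⊤ : ℕ∞) (ZVert (Z α)) := fun α => contDiff_ZVert (hZ α)
  have hEc : ∀ β, ContDiff ℝ (⊤ : ℕ∞) (fun p : Phase n => fderiv ℝ L p (ZVert (Z β) p)) :=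
    fun β => (hL.fderiv_right (by simp)).clm_apply (hZVd β)
  have hvc : ∀ α, ContDiff ℝ (⊤ : ℕ∞) (fun p : Phase n => θ α p.1 ⬝ᵥ p.2.1) :=
    fun α => contDiff_dot ((hθ α).comp contDiff_fst) (contDiff_fst.comp contDiff_snd)
  -- invariance of the quasi-velocities
  have hvinv : ∀ i α (p : Phase n),
      fderiv ℝ (fun p : Phase n => θ α p.1 ⬝ᵥ p.2.1) p (ZComp (ξ i) p) = 0 := by
    intro i α p
    have hfθ : DifferentiableAt ℝ (fun p : Phase n => θ α p.1) p :=
      ((hθ α).differentiable (by simp) p.1).comp p differentiableAt_fst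
    have hBc : HasFDerivAt (fun p : Phase n => p.2.1)
        ((ContinuousLinearMap.fst ℝ (Fin n → ℝ) ℝ).comp
          (ContinuousLinearMap.snd ℝ (Fin n → ℝ) ((Fin n → ℝ) × ℝ))) p :=
      hasFDerivAt_fst.comp p hasFDerivAt_snd
    rw [fderiv_dot hfθ hBc.differentiableAt]
    have hAh : HasFDerivAt (fun p : Phase n => θ α p.1)
        ((fderiv ℝ (θ α) p.1).comp (ContinuousLinearMap.fst ℝ (Fin n → ℝ) ((Fin n → ℝ) × ℝ))) p :=
      ((hθ α).differentiable (by simp) p.1).hasFDerivAt.comp p hasFDerivAt_fst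
    have hA : fderiv ℝ (fun p : Phase n => θ α p.1) p (ZComp (ξ i) p)
        = fderiv ℝ (θ α) p.1 (ξ i p.1) := by
      rw [hAh.fderiv]
      simp [ZComp]
    have hB : fderiv ℝ (fun p : Phase n => p.2.1) p (ZComp (ξ i) p)
        = fderiv ℝ (ξ i) p.1 p.2.1 := by
      rw [hBc.fderiv]
      simp [ZComp]
    rw [hA, hB]
    rcases Nat.eq_zero_or_pos n with h0 | hpos
    · subst h0
      simp [dotProduct]
    · haveI : Nonempty (Fin n) := Fin.pos_iff_nonempty.mp hpos
      let T : (Fin n → ℝ) →ₗ[ℝ] ℝ :=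
        { toFun := fun u => fderiv ℝ (θ α) p.1 (ξ i p.1) ⬝ᵥ u
            + θ α p.1 ⬝ᵥ fderiv ℝ (ξ i) p.1 u
          map_add' := by
            intro a b
            simp only [dotProduct_add, map_add]
            ring
          map_smul' := by
            intro c a
            simp only [dotProduct_smul, _root_.map_smul, smul_eq_mul, RingHom.id_apply]
            ring }
      have hTz : ∀ β, T (Z β p.1) = 0 := by
        intro β
        have h1 : fderiv ℝ (ξ i) p.1 (Z β p.1) = fderiv ℝ (Z β) p.1 (ξ i p.1) := by
          have h := congrFun (hZinv i β) p.1
          simp only [lieBracket, Pi.zero_apply] at h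
          exact (sub_eq_zero.mp h).symm
        have h2 : fderiv ℝ (fun r => θ α r ⬝ᵥ Z β r) p.1 (ξ i p.1) = 0 := by
          have hc : (fun r => θ α r ⬝ᵥ Z β r) = fun _ => (if α = β then (1 : ℝ) else 0) :=
            funext fun r => hdual r α β
          rw [hc]
          simp
        rw [fderiv_dot ((hθ α).differentiable (by simp) p.1)
          ((hZ β).differentiable (by simp) p.1)] at h2
        show fderiv ℝ (θ α) p.1 (ξ i p.1) ⬝ᵥ Z β p.1
            + θ α p.1 ⬝ᵥ fderiv ℝ (ξ i) p.1 (Z β p.1) = 0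
        rw [h1]
        exact h2
      have hcard : Fintype.card (Fin n) = Module.finrank ℝ (Fin n → ℝ) := by simp
      have hT0 : T = 0 := by
        refine Module.Basis.ext (basisOfLinearIndependentOfCardEqFinrank (hframe p.1) hcard) ?_
        intro β
        have hB' : basisOfLinearIndependentOfCardEqFinrank (hframe p.1) hcard β = Z β p.1 :=
          congrFun (coe_basisOfLinearIndependentOfCardEqFinrank (hframe p.1) hcard) β
        rw [hB']
        simpa using hTz β
      have hTu : T p.2.1 = 0 := by rw [hT0]; simp
      exact hTu
  -- the lifted action kills `Z^V_β(L)`, `Z^C_β(L)` and `∂L/∂s`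
  have hLinv' : ∀ i, (fun p : Phase n => fderiv ℝ L p (ZComp (ξ i) p)) = fun _ => (0 : ℝ) :=
    fun i => funext (hLinv i)
  have hEinv : ∀ i β p, fderiv ℝ (fun p' : Phase n =>
      fderiv ℝ L p' (ZVert (Z β) p')) p (ZComp (ξ i) p) = 0 := by
    intro i β p
    have hb := bracket_fn hL ((hξCd i).differentiable (by simp) p) ((hZVd β).differentiable (by simp) p)
    rw [bracket_ZComp_ZVert (hξ i) (hZ β) (hZinv i β) p, hLinv' i] at hb
    simpa using hb
  have hsinv : ∀ i p, fderiv ℝ (fun p' : Phase n =>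
      fderiv ℝ L p' ((0, 0, 1) : Phase n)) p (ZComp (ξ i) p) = 0 := by
    intro i p
    have hb := bracket_fn hL (Y := fun _ => ((0, 0, 1) : Phase n))
      ((hξCd i).differentiable (by simp) p) (differentiableAt_const _)
    rw [bracket_ZComp_const (hξ i) p, hLinv' i] at hb
    simpa using hb
  have hZCLinv : ∀ i β p, fderiv ℝ (fun p' : Phase n =>
      fderiv ℝ L p' (ZComp (Z β) p')) p (ZComp (ξ i) p) = 0 := by
    intro i β p
    have hb := bracket_fn hL ((hξCd i).differentiable (by simp) p) ((hZCd β).differentiable (by simp) p)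
    rw [bracket_ZComp_ZComp (hξ i) (hZ β) (hZinv i β) p, hLinv' i] at hb
    simpa using hb
  -- smoothness of Γ
  have hΓfun : Γ = fun p => (∑ α, (θ α p.1 ⬝ᵥ p.2.1) • ZComp (Z α) p)
      + (∑ α, Γcoef α p • ZVert (Z α) p) + L p • ((0, 0, 1) : Phase n) := funext hΓ
  have hS1c : ContDiff ℝ (⊤ : ℕ∞) (fun p : Phase n => ∑ α, (θ α p.1 ⬝ᵥ p.2.1) • ZComp (Z α) p) :=
    ContDiff.sum fun α _ => (hvc α).smul (hZCd α)
  have hS2c : ContDiff ℝ (⊤ : ℕ∞) (fun p : Phase n => ∑ α, Γcoef α p • ZVert (Z α) p) :=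
    ContDiff.sum fun α _ => (hΓcoef α).smul (hZVd α)
  have hS3c : ContDiff ℝ (⊤ : ℕ∞) (fun p : Phase n => L p • ((0, 0, 1) : Phase n)) :=
    hL.smul contDiff_const
  have hΓc : ContDiff ℝ (⊤ : ℕ∞) Γ := by
    rw [hΓfun]; exact (hS1c.add hS2c).add hS3c
  -- the bracket formula
  have hbr : ∀ i p, lieBracket (ZComp (ξ i)) Γ p
      = ∑ α, (fderiv ℝ (Γcoef α) p (ZComp (ξ i) p)) • ZVert (Z α) p := by
    intro i p
    have hd1 := hS1c.differentiable (by simp) p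
    have hd2 := hS2c.differentiable (by simp) p
    have hd3 := hS3c.differentiable (by simp) p
    have t1 : ∀ α, lieBracket (ZComp (ξ i))
        (fun q : Phase n => (θ α q.1 ⬝ᵥ q.2.1) • ZComp (Z α) q) p = 0 := by
      intro α
      rw [lieBracket_smul_right ((hvc α).differentiable (by simp) p)
        ((hZCd α).differentiable (by simp) p), hvinv i α p,
        bracket_ZComp_ZComp (hξ i) (hZ α) (hZinv i α) p]
      simp
    have t2 : ∀ α, lieBracket (ZComp (ξ i))
        (fun q : Phase n => Γcoef α q • ZVert (Z α) q) p
        = (fderiv ℝ (Γcoef α) p (ZComp (ξ i) p)) • ZVert (Z α) p := by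
      intro α
      rw [lieBracket_smul_right ((hΓcoef α).differentiable (by simp) p)
        ((hZVd α).differentiable (by simp) p),
        bracket_ZComp_ZVert (hξ i) (hZ α) (hZinv i α) p]
      simp
    have t3 : lieBracket (ZComp (ξ i))
        (fun q : Phase n => L q • ((0, 0, 1) : Phase n)) p = 0 := by
      rw [lieBracket_smul_right (hL.differentiable (by simp) p) (differentiableAt_const _),
        bracket_ZComp_const (hξ i) p, hLinv i p]
      simp
    rw [hΓfun]
    rw [lieBracket_add_right (hd1.fun_add hd2) hd3,
        lieBracket_add_right hd1 hd2,
        lieBracket_sum_right Finset.univ _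
          (fun α _ => ((hvc α).fun_smul (hZCd α)).differentiable (by simp) p),
        lieBracket_sum_right Finset.univ _
          (fun α _ => ((hΓcoef α).fun_smul (hZVd α)).differentiable (by simp) p)]
    simp only [t2, t3]
    simp only [t1]
    simp
  -- the key identity coming from differentiating the Herglotz equation
  have hkey : ∀ i β p, fderiv ℝ (fun p' : Phase n =>
      fderiv ℝ L p' (ZVert (Z β) p')) p (lieBracket (ZComp (ξ i)) Γ p) = 0 := by
    intro i β p
    have hb := bracket_fn (hEc β) ((hξCd i).differentiable (by simp) p)
      (hΓc.differentiable (by simp) p)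
    have hz : (fun q : Phase n => fderiv ℝ (fun p' : Phase n =>
        fderiv ℝ L p' (ZVert (Z β) p')) q (ZComp (ξ i) q)) = fun _ => (0 : ℝ) :=
      funext fun q => hEinv i β q
    rw [hz] at hb
    have hH : (fun q : Phase n => fderiv ℝ (fun p' : Phase n =>
          fderiv ℝ L p' (ZVert (Z β) p')) q (Γ q))
        = fun q : Phase n => fderiv ℝ L q (ZComp (Z β) q)
          + fderiv ℝ L q ((0, 0, 1) : Phase n) * fderiv ℝ L q (ZVert (Z β) q) := by
      funext q
      have h := hHerglotz β q
      linarith [h]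
    rw [hH] at hb
    have hAd : DifferentiableAt ℝ (fun q : Phase n => fderiv ℝ L q (ZComp (Z β) q)) p :=
      ((hL.fderiv_right (by simp)).clm_apply (hZCd β)).differentiable (by simp) p
    have hBd : DifferentiableAt ℝ (fun q : Phase n =>
        fderiv ℝ L q ((0, 0, 1) : Phase n)) p :=
      ((hL.fderiv_right (m := (⊤ : ℕ∞)) (by simp)).clm_apply contDiff_const).differentiable (by simp) p
    have hCd : DifferentiableAt ℝ (fun q : Phase n => fderiv ℝ L q (ZVert (Z β) q)) p :=
      (hEc β).differentiable (by simp) p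
    rw [fderiv_fun_add hAd (hBd.fun_mul hCd), fderiv_fun_mul hBd hCd] at hb
    simp only [ContinuousLinearMap.add_apply, ContinuousLinearMap.coe_smul',
      Pi.smul_apply, smul_eq_mul, fderiv_const, Pi.zero_apply,
      ContinuousLinearMap.zero_apply] at hb
    rw [hZCLinv i β p, hsinv i p, hEinv i β p] at hb
    simpa using hb.symm
  -- conclude via regularity
  have hcoef : ∀ i (p : Phase n) α, fderiv ℝ (Γcoef α) p (ZComp (ξ i) p) = 0 := by
    intro i p
    set M : Matrix (Fin n) (Fin n) ℝ := Matrix.of fun α β =>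
      fderiv ℝ (fun p' : Phase n => fderiv ℝ L p' (ZVert (Z β) p')) p (ZVert (Z α) p) with hM
    set c : Fin n → ℝ := fun α => fderiv ℝ (Γcoef α) p (ZComp (ξ i) p) with hcdef
    have hvm : c ᵥ* M = 0 := by
      funext β
      have h0 := hkey i β p
      rw [hbr i p, map_sum] at h0
      simp only [_root_.map_smul, smul_eq_mul] at h0
      simpa [Matrix.vecMul, dotProduct, hM, hcdef] using h0
    have hMu : IsUnit M.det := isUnit_iff_ne_zero.mpr (by rw [hM]; exact hreg p)
    have hc0 : c = 0 := by
      have h2 := congrArg (fun v => v ᵥ* M⁻¹) hvm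
      simpa [Matrix.vecMul_vecMul, Matrix.mul_nonsing_inv M hMu, Matrix.vecMul_one,
        Matrix.zero_vecMul] using h2
    intro α
    exact congrFun hc0 α
  refine ⟨fun i α p => hcoef i p α, ?_⟩
  intro i
  funext p
  rw [hbr i p]
  simp [hcoef i p]

end
end
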